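/- arXiv:1703.06285 — 2 statements merged into one kernel-verified Lean document; each statement's English description precedes it below -/
import Mathlib

section
/- Let G be a finite group, X a finite G-set, H a subgroup of G, A a finite set with |A| ≥ 2, and a ∈ A. For each i ≥ 1, let O_i be the number of H-orbits of X of cardinality i. Equip A^X with the G-action (g•f)(x) = f(g⁻¹•x). Then the following polynomial identity holds in ℤ[t]: Σ_{n≥0} #{f ∈ A^X : f is H-fixed and |{x ∈ X : f(x) ≠ a}| = n}·tⁿ = Π_{i≥1} (1 + (|A|−1)·t^i)^{O_i}, the product taken over the i with O_i ≠ 0. -/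
/-!
An `H`-fixed coloring is the same as a coloring of the `H`-orbits, and the number of points it
does not color `a` is the total size of the orbits not colored `a`. So the weight enumerator
factors over the orbits: an orbit of size `i` contributes `1 + (|A| - 1) t^i`, for the color `a`
(weight `0`) and the `|A| - 1` other colors (weight `i`).
-/

open Finset Polynomial MulAction

theorem Fintype.sum_range_natCard_fiber_zsmul {α M : Type*} [Fintype α] [AddCommGroup M]
    (w : α → ℕ) (v : ℕ → M) {N : ℕ} (hw : ∀ x, w x ≤ N) :
    ∑ n ∈ range (N + 1), (Nat.card {x // w x = n} : ℤ) • v n = ∑ x, v (w x) := by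
  classical
  rw [← sum_fiberwise_of_maps_to' (g := w) (t := range (N + 1))
    fun x _ => mem_range.2 (Nat.lt_succ_of_le (hw x))]
  refine Finset.sum_congr rfl fun n _ => ?_
  rw [sum_const, Nat.card_eq_fintype_card, Fintype.card_subtype, natCast_zsmul]

theorem Fintype.prod_comp_eq_prod_pow_natCard_fiber {ι κ M : Type*} [Fintype ι] [CommMonoid M]
    [DecidableEq κ] (f : κ → M) (g : ι → κ) {t : Finset κ} (hg : ∀ i, g i ∈ t) :
    ∏ i, f (g i) = ∏ b ∈ t, f b ^ Nat.card {i // g i = b} := by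
  classical
  rw [← prod_fiberwise_of_maps_to' fun i _ => hg i]
  refine Finset.prod_congr rfl fun b _ => ?_
  rw [prod_const, Nat.card_eq_fintype_card, Fintype.card_subtype]

namespace Polynomial

variable {R : Type*} [CommRing R]

theorem sum_X_pow_ite_eq {A : Type*} [Fintype A] [DecidableEq A] (a : A) (k : ℕ) :
    ∑ c : A, (X : R[X]) ^ (if c = a then 0 else k) = 1 + C ((Fintype.card A : R) - 1) * X ^ k := by
  rw [Fintype.sum_eq_add_sum_compl a, if_pos rfl, pow_zero,
    sum_congr rfl fun c hc => by rw [if_neg (by simpa using hc)], sum_const, card_compl,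
    card_singleton, nsmul_eq_mul, Nat.cast_sub (Fintype.card_pos_iff.2 ⟨a⟩), map_sub,
    map_natCast, map_one, Nat.cast_one]

theorem sum_pi_X_pow_sum_ne_eq_prod {ι A : Type*} [Fintype ι] [DecidableEq ι] [Fintype A]
    [DecidableEq A] (a : A) (k : ι → ℕ) :
    ∑ g : ι → A, (X : R[X]) ^ (∑ i with g i ≠ a, k i) =
      ∏ i, (1 + C ((Fintype.card A : R) - 1) * X ^ k i) := by
  rw [Finset.prod_congr rfl fun i _ => (sum_X_pow_ite_eq a (k i)).symm, Fintype.prod_sum]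
  refine Finset.sum_congr rfl fun g _ => ?_
  rw [prod_pow_eq_pow_sum, sum_filter]
  simp only [ite_not]

end Polynomial

namespace MulAction

variable {G S : Type*} [Group G] [MulAction G S]

theorem orbitRel.Quotient.natCard_orbit_pos [Finite S] (ω : orbitRel.Quotient G S) :
    0 < Nat.card ω.orbit :=
  have := ω.nonempty_orbit.to_subtype
  Nat.card_pos

theorem natCard_subtype_mk_eq_sum [Fintype S] [Fintype (orbitRel.Quotient G S)]
    (p : orbitRel.Quotient G S → Prop) [DecidablePred p] :
    Nat.card {x : S // p (Quotient.mk'' x)} = ∑ ω with p ω, Nat.card ω.orbit := by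
  classical
  rw [Nat.card_eq_fintype_card, Fintype.card_subtype,
    card_eq_sum_card_fiberwise (f := Quotient.mk'') (t := univ.filter p)
      fun x hx => by simpa using hx]
  refine sum_congr rfl fun ω hω => ?_
  rw [Nat.card_congr (Equiv.subtypeEquivRight fun x => orbitRel.Quotient.mem_orbit),
    Nat.card_eq_fintype_card, Fintype.card_subtype, filter_filter]
  refine congrArg card (filter_congr fun x _ => ?_)
  exact and_iff_right_of_imp fun hx => hx ▸ (mem_filter.1 hω).2

variable (G S) in
def invariantFunEquiv (A : Type*) :
    {f : S → A // ∀ (g : G) x, f (g • x) = f x} ≃ (orbitRel.Quotient G S → A) where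
  toFun f := Quotient.lift f.1 (by rintro _ y ⟨g, rfl⟩; exact f.2 g y)
  invFun g := ⟨fun x => g (Quotient.mk'' x), fun _ _ => congrArg g (Quotient.sound ⟨_, rfl⟩)⟩
  left_inv _ := rfl
  right_inv g := funext fun ω => Quotient.inductionOn' ω fun _ => rfl

theorem natCard_invariant_weight_eq [Fintype S] [Fintype (orbitRel.Quotient G S)] {A : Type*}
    [DecidableEq A] (a : A) (n : ℕ) :
    Nat.card {f : S → A // (∀ (g : G) x, f (g • x) = f x) ∧ Nat.card {x // f x ≠ a} = n} =
      Nat.card {g : orbitRel.Quotient G S → A // ∑ ω with g ω ≠ a, Nat.card ω.orbit = n} :=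
  Nat.card_congr <| (Equiv.subtypeSubtypeEquivSubtypeInter _ _).symm.trans <|
    (invariantFunEquiv G S A).subtypeEquiv fun f => by
      rw [← natCard_subtype_mk_eq_sum]; rfl

end MulAction

theorem Subgroup.forall_mem_apply_inv_smul_eq_iff {G S A : Type*} [Group G] [MulAction G S]
    (H : Subgroup G) (f : S → A) :
    (∀ h ∈ H, ∀ x : S, f (h⁻¹ • x) = f x) ↔ ∀ (h : H) x, f (h • x) = f x :=
  ⟨fun hf h x => by simpa [Subgroup.smul_def] using hf _ (inv_mem h.2) x,
    fun hf h hh x => hf ⟨h, hh⟩⁻¹ x⟩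

theorem fixed_colorings_weight_polynomial_general {G S A : Type*} [Group G]
    [Fintype S] [MulAction G S] [Fintype A] (a : A)
    (H : Subgroup G) (O : ℕ → ℕ)
    (hO : ∀ i, O i =
      Nat.card {ω : MulAction.orbitRel.Quotient H S // Nat.card ω.orbit = i}) :
    (∑ n ∈ Finset.range (Fintype.card S + 1),
        (Nat.card {f : S → A // (∀ h ∈ H, ∀ x : S, f (h⁻¹ • x) = f x) ∧
            Nat.card {x : S // f x ≠ a} = n} : ℤ) •
          (Polynomial.X : Polynomial ℤ) ^ n) =
      ∏ i ∈ Finset.Icc 1 (Fintype.card S),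
        (1 + Polynomial.C ((Fintype.card A : ℤ) - 1) *
          (Polynomial.X : Polynomial ℤ) ^ i) ^ (O i) := by
  classical
  have hweight (g : orbitRel.Quotient H S → A) :
      ∑ ω with g ω ≠ a, Nat.card ω.orbit ≤ Fintype.card S := by
    rw [← natCard_subtype_mk_eq_sum fun ω => g ω ≠ a, ← Nat.card_eq_fintype_card]
    exact Finite.card_subtype_le _
  have horbit (ω : orbitRel.Quotient H S) : Nat.card ω.orbit ∈ Icc 1 (Fintype.card S) :=
    mem_Icc.2 ⟨ω.natCard_orbit_pos,
      (Finite.card_subtype_le _).trans_eq Nat.card_eq_fintype_card⟩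
  simp_rw [H.forall_mem_apply_inv_smul_eq_iff, natCard_invariant_weight_eq]
  rw [Fintype.sum_range_natCard_fiber_zsmul _ _ hweight, sum_pi_X_pow_sum_ne_eq_prod,
    Fintype.prod_comp_eq_prod_pow_natCard_fiber
      (fun i => 1 + C ((Fintype.card A : ℤ) - 1) * X ^ i) _ horbit]
  simp_rw [hO]

/-- For a finite `G`-set `S`, a subgroup `H`, a finite color set
`A` with `|A| ≥ 2` and `a ∈ A`, the polynomial counting `H`-fixed colorings
`f : S → A` by the number `n` of points colored differently from `a` equals
`∏_{i ≥ 1} (1 + (|A| - 1) t^i)^(O i)`, where `O i` is the number of `H`-orbits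
of `S` of cardinality `i`. -/
theorem fixed_colorings_weight_polynomial {G S A : Type*} [Group G] [Fintype G]
    [Fintype S] [MulAction G S] [Fintype A] (hA : 2 ≤ Fintype.card A) (a : A)
    (H : Subgroup G) (O : ℕ → ℕ)
    (hO : ∀ i, O i =
      Nat.card {ω : MulAction.orbitRel.Quotient H S // Nat.card ω.orbit = i}) :
    (∑ n ∈ Finset.range (Fintype.card S + 1),
        (Nat.card {f : S → A // (∀ h ∈ H, ∀ x : S, f (h⁻¹ • x) = f x) ∧
            Nat.card {x : S // f x ≠ a} = n} : ℤ) •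
          (Polynomial.X : Polynomial ℤ) ^ n) =
      ∏ i ∈ Finset.Icc 1 (Fintype.card S),
        (1 + Polynomial.C ((Fintype.card A : ℤ) - 1) *
          (Polynomial.X : Polynomial ℤ) ^ i) ^ (O i) :=
  fixed_colorings_weight_polynomial_general a H O hO
end

section
/- Let n ≥ 4 with 4 ∣ n and let A be a finite set with k = |A| ≥ 2. Let the dihedral group D_n of order 2n act on ℤ/nℤ by: the rotation r^j sends x to x + j, and the reflection s·r^j sends x to j − x; let D_n act on colorings f : ℤ/nℤ → A by (g•f)(x) = f(g⁻¹•x). Then the number of orbits of colorings that are free (of cardinality 2n) equals (1/(2n))·Σ_{d∣n} μ(n/d)·k^d − (1/4)·Σ_{d∣n, d even} μ(n/d)·(k^{d/2+1} + k^{d/2}), where μ is the Möbius function (when 4 ∣ n, μ(n/d) = 0 for every odd divisor d of n). -/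
/-- The dihedral action on the vertices `ZMod n` of a regular `n`-gon: rotations
act by translation and the reflection `sr j = s·r^j` sends `x` to `j - x`. -/
instance dihedralVertexAction (n : ℕ) : MulAction (DihedralGroup n) (ZMod n) where
  smul g x := match g with
    | DihedralGroup.r j => x - j
    | DihedralGroup.sr j => j - x
  one_smul x := by show x - 0 = x; rw [sub_zero]
  mul_smul a b x := by
    cases a with
    | r i =>
      cases b with
      | r j => show x - (i + j) = x - j - i; ring
      | sr j => show (j - i) - x = (j - x) - i; ring
    | sr i =>
      cases b with
      | r j => show (i + j) - x = i - (x - j); ring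
      | sr j => show x - (j - i) = i - (j - x); ring

/-- The induced action on colorings `f : ZMod n → A`: `(g • f) x = f (g⁻¹ • x)`. -/
instance dihedralColoringAction (n : ℕ) (A : Type*) :
    MulAction (DihedralGroup n) (ZMod n → A) where
  smul g f := fun x => f (g⁻¹ • x)
  one_smul f := by
    funext x; show f ((1 : DihedralGroup n)⁻¹ • x) = f x; rw [inv_one, one_smul]
  mul_smul a b f := by
    funext x; show f ((a * b)⁻¹ • x) = f (b⁻¹ • a⁻¹ • x)
    rw [mul_inv_rev, mul_smul]

/-!
A coloring lies in a free orbit iff it is fixed by no rotation and by no reflection. The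
rotations fixing `f` form a subgroup of `ZMod n` whose index is the least period of `f`, so
Möbius inversion over the divisors `e ∣ n` counts the rotation-primitive colorings, and those
among them fixed by a given reflection, through the colorings with period dividing `e`, which are
the colorings of `ZMod e`. A primitive coloring is fixed by at most one reflection, because two
reflections compose to a rotation. For `e` even a coloring of `ZMod e` fixed by `x ↦ i - x` is
determined by its values on half of the `e`-gon: there are `k ^ (e/2 + 1)` of them for `i` even and
`k ^ (e/2)` for `i` odd. Odd `e` contribute nothing, since `4 ∣ n` forces `μ (n / e) = 0`.
Finally every free orbit has `|D_n| = 2n` elements.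
-/

open Finset MulAction
open scoped ArithmeticFunction.Moebius

theorem MulAction.card_orbits_with_card_eq_mul {G α : Type*} [Group G] [MulAction G α]
    [Finite α] (N : ℕ) :
    Nat.card {ω : orbitRel.Quotient G α // Nat.card ω.orbit = N} * N =
      Nat.card {x : α // Nat.card (orbit G x) = N} := by
  have : Fintype (orbitRel.Quotient G α) := Fintype.ofFinite _
  calc Nat.card {ω : orbitRel.Quotient G α // Nat.card ω.orbit = N} * N
      = ∑ ω : {ω : orbitRel.Quotient G α // Nat.card ω.orbit = N}, Nat.card ω.1.orbit := by
        rw [Finset.sum_congr rfl fun ω _ => ω.2, Finset.sum_const, Finset.card_univ,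
          Nat.card_eq_fintype_card, smul_eq_mul]
    _ = Nat.card (Σ ω : {ω : orbitRel.Quotient G α // Nat.card ω.orbit = N}, ω.1.orbit) :=
        Nat.card_sigma.symm
    _ = _ := Nat.card_congr <| Equiv.symm <|
        (Equiv.subtypeEquiv (selfEquivSigmaOrbits' G α) fun x => by
          rw [← orbitRel.Quotient.orbit_mk]; rfl).trans (Equiv.subtypeSigmaEquiv _ _)

@[to_additive]
theorem Subgroup.index_eq_card_iff_eq_bot {G : Type*} [Group G] [Finite G] (H : Subgroup G) :
    H.index = Nat.card G ↔ H = ⊥ := by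
  rw [← H.card_mul_index, eq_comm, Nat.mul_eq_right H.index_ne_zero_of_finite, card_eq_one]

theorem MulAction.card_free_orbits_mul_card_group {G α : Type*} [Group G] [Finite G]
    [MulAction G α] [Finite α] :
    Nat.card {ω : orbitRel.Quotient G α // Nat.card ω.orbit = Nat.card G} * Nat.card G =
      Nat.card {x : α // stabilizer G x = ⊥} := by
  have hfree (x : α) : stabilizer G x = ⊥ ↔ Nat.card (orbit G x) = Nat.card G := by
    rw [← Subgroup.index_eq_card_iff_eq_bot, index_stabilizer, Nat.card_coe_set_eq]
  simp_rw [hfree]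
  exact card_orbits_with_card_eq_mul _

theorem MulAction.card_filter_conj_smul_eq_self {G α : Type*} [Group G] [MulAction G α]
    [Fintype α] [DecidableEq α] (g h : G) :
    #{x : α | (h * g * h⁻¹) • x = x} = #{x : α | g • x = x} := by
  refine Finset.card_equiv (MulAction.toPerm h⁻¹) fun x => ?_
  simp [mul_smul, smul_eq_iff_eq_inv_smul]

theorem ZMod.intCast_mem_iff_index_dvd {n : ℕ} (H : AddSubgroup (ZMod n)) (m : ℤ) :
    (m : ZMod n) ∈ H ↔ (H.index : ℤ) ∣ m := by
  obtain ⟨a, ha⟩ := Int.subgroup_cyclic (H.comap (Int.castAddHom (ZMod n)))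
  have hindex : H.index = a.natAbs := by
    rw [← AddSubgroup.index_comap_of_surjective H (f := Int.castAddHom (ZMod n))
      ZMod.intCast_surjective, ha, ← AddSubgroup.zmultiples_eq_closure, Int.index_zmultiples]
  rw [hindex, Int.natAbs_dvd, ← Int.mem_zmultiples_iff, AddSubgroup.zmultiples_eq_closure, ← ha]
  rfl

theorem ZMod.natCast_mem_iff_index_dvd {n : ℕ} (H : AddSubgroup (ZMod n)) (e : ℕ) :
    (e : ZMod n) ∈ H ↔ H.index ∣ e := by
  exact_mod_cast ZMod.intCast_mem_iff_index_dvd H e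

namespace ArithmeticFunction

theorem sum_moebius_div_filter_dvd {n d : ℕ} (hn : n ≠ 0) (hd : d ∣ n) :
    ∑ e ∈ n.divisors with d ∣ e, (μ (n / e) : ℤ) = if d = n then 1 else 0 := by
  have hsum : ∑ e ∈ n.divisors with d ∣ e, (μ (n / e) : ℤ) =
      ∑ m ∈ (n / d).divisors, (μ m : ℤ) := by
    refine Finset.sum_nbij' (n / ·) (n / ·) ?_ ?_ ?_ ?_ fun _ _ => rfl
    · simp only [Finset.mem_filter, Nat.mem_divisors]
      rintro e ⟨⟨hen, -⟩, hde⟩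
      exact ⟨Nat.div_dvd_div_left hen hde, (Nat.div_ne_zero_iff_of_dvd hd).2
        ⟨hn, fun h => hn (Nat.eq_zero_of_zero_dvd (h ▸ hd))⟩⟩
    · simp only [Finset.mem_filter, Nat.mem_divisors]
      rintro m ⟨hm, -⟩
      have hdm : d * m ∣ n := Nat.mul_dvd_of_dvd_div hd hm
      exact ⟨⟨Nat.div_dvd_of_dvd (dvd_of_mul_left_dvd hdm), hn⟩,
        Nat.dvd_div_of_mul_dvd (by rwa [mul_comm] at hdm)⟩
    · simp only [Finset.mem_filter, Nat.mem_divisors]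
      exact fun e he => Nat.div_div_self he.1.1 hn
    · simp only [Nat.mem_divisors]
      exact fun m hm => Nat.div_div_self (hm.1.trans (Nat.div_dvd_of_dvd hd)) hn
  rw [hsum, ← coe_mul_zeta_apply, moebius_mul_coe_zeta, one_apply]
  congr 1
  apply propext
  rw [Nat.div_eq_iff_eq_mul_left (Nat.pos_of_dvd_of_pos hd (Nat.pos_of_ne_zero hn)) hd, one_mul,
    eq_comm]

theorem moebius_div_eq_zero_of_four_dvd {n e : ℕ} (hn : 4 ∣ n) (he : e ∣ n)
    (hodd : ¬Even e) : μ (n / e) = 0 := by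
  have hcop : Nat.Coprime 4 e :=
    Nat.Coprime.pow_left 2 (Nat.coprime_two_left.2 (Nat.not_even_iff_odd.1 hodd))
  have h4 : 2 * 2 ∣ n / e :=
    hcop.dvd_of_dvd_mul_left (by rwa [Nat.mul_div_cancel' he])
  refine moebius_eq_zero_of_not_squarefree fun hsq => ?_
  exact absurd (Nat.isUnit_iff.1 (hsq 2 h4)) (by norm_num)

end ArithmeticFunction

theorem Fintype.two_mul_sum_eq_card_mul_of_add_shift {G : Type*} [AddGroup G] [Fintype G]
    {F : G → ℕ} {C : ℕ} (a : G) (hF : ∀ g, F g + F (g + a) = C) :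
    2 * ∑ g, F g = Fintype.card G * C := by
  calc 2 * ∑ g, F g = ∑ g, F g + ∑ g, F (g + a) := by
        rw [two_mul]
        exact congrArg _ (Equiv.sum_comp (Equiv.addRight a) F).symm
    _ = Fintype.card G * C := by
        simp only [← Finset.sum_add_distrib, hF, Finset.sum_const, Finset.card_univ, smul_eq_mul]

theorem Function.Involutive.card_filter_comp_eq_self {α A : Type*} [Fintype α] [DecidableEq α]
    [Fintype A] [DecidableEq A] {σ : α → α} (hσ : Function.Involutive σ) (T : Finset α)
    (hcover : ∀ x, x ∈ T ∨ σ x ∈ T) (hT : ∀ x ∈ T, σ x ∈ T → σ x = x) :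
    #{g : α → A | g ∘ σ = g} = Fintype.card A ^ #T := by
  rw [← Fintype.card_coe T, ← Fintype.card_fun, ← Fintype.card_subtype]
  refine Fintype.card_congr
    { toFun := fun g t => g.1 t
      invFun := fun h => ⟨fun x => if hx : x ∈ T then h ⟨x, hx⟩
          else h ⟨σ x, (hcover x).resolve_left hx⟩, ?_⟩
      left_inv := fun g => ?_
      right_inv := fun h => ?_ }
  · funext x
    by_cases hx : x ∈ T <;> by_cases hσx : σ x ∈ T
    · simp [hx, hT x hx hσx]
    · simp [hx, hσx, hσ x]
    · simp [hx, hσx]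
    · exact absurd (hcover x) (by tauto)
  · obtain ⟨g, hg⟩ := g
    ext x
    by_cases hx : x ∈ T
    · simp [hx]
    · simpa [hx] using congrFun hg x
  · simp

theorem ZMod.card_filter_val_lt {m : ℕ} [NeZero m] {L : ℕ} (hL : L ≤ m) :
    #{x : ZMod m | x.val < L} = L := by
  rw [← Finset.card_range L]
  refine Finset.card_nbij' ZMod.val Nat.cast (fun x hx => by simpa using hx) ?_
    (fun x _ => ZMod.natCast_zmod_val x) ?_
  · intro t ht
    simp only [Finset.coe_range, Set.mem_Iio] at ht
    simp [ZMod.val_cast_of_lt (ht.trans_le hL), ht]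
  · intro t ht
    simp only [Finset.coe_range, Set.mem_Iio] at ht
    exact ZMod.val_cast_of_lt (ht.trans_le hL)

namespace NgonColoring

open scoped Classical

open DihedralGroup

variable {n : ℕ} {A : Type*}

theorem r_smul_apply (j : ZMod n) (f : ZMod n → A) (x : ZMod n) :
    (r j • f) x = f (x + j) := by
  show f (x - -j) = f (x + j)
  rw [sub_neg_eq_add]

theorem sr_smul_apply (j : ZMod n) (f : ZMod n → A) (x : ZMod n) :
    (sr j • f) x = f (j - x) := rfl

def periods (f : ZMod n → A) : AddSubgroup (ZMod n) where
  carrier := {j | r j • f = f}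
  zero_mem' := by simp [r_zero]
  add_mem' {a b} (ha : r a • f = f) (hb : r b • f = f) :=
    show r (a + b) • f = f by rw [← r_mul_r, mul_smul, hb, ha]
  neg_mem' {a} (ha : r a • f = f) := show r (-a) • f = f by rw [← inv_r, inv_smul_eq_iff, ha]

theorem mem_periods {f : ZMod n → A} {j : ZMod n} : j ∈ periods f ↔ r j • f = f := Iff.rfl

theorem periods_eq_bot_iff_index [NeZero n] (f : ZMod n → A) :
    periods f = ⊥ ↔ (periods f).index = n := by
  rw [← AddSubgroup.index_eq_card_iff_eq_bot, Nat.card_zmod]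

theorem natCast_mem_periods_iff_exists_comp [NeZero n] {e : ℕ} [NeZero e] (he : e ∣ n)
    (f : ZMod n → A) :
    (e : ZMod n) ∈ periods f ↔ ∃ g : ZMod e → A, g ∘ ZMod.castHom he (ZMod e) = f := by
  set π := ZMod.castHom he (ZMod e)
  constructor
  · intro hef
    refine ⟨fun y => f (y.val : ZMod n), funext fun x => ?_⟩
    set z := ((π x).val : ZMod n) - x
    -- `z` reduces to `0` mod `e`, so the least period of `f`, which divides `e`, divides `z`.
    have hz : z ∈ periods f := by
      rw [← ZMod.natCast_zmod_val z, ZMod.natCast_mem_iff_index_dvd]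
      refine ((ZMod.natCast_mem_iff_index_dvd _ _).1 hef).trans ?_
      rw [← ZMod.natCast_eq_zero_iff, ← map_natCast π, ZMod.natCast_zmod_val, map_sub,
        map_natCast, ZMod.natCast_val, ZMod.cast_id, sub_self]
    simpa [z, r_smul_apply] using congrFun (mem_periods.1 hz) x
  · rintro ⟨g, rfl⟩
    refine mem_periods.2 (funext fun x => ?_)
    simp only [r_smul_apply, Function.comp_apply, map_add, map_natCast, ZMod.natCast_self, add_zero]

theorem sr_smul_comp_castHom {e : ℕ} (he : e ∣ n) (j : ZMod n) (g : ZMod e → A) :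
    sr j • (g ∘ ZMod.castHom he (ZMod e)) =
      (sr (ZMod.castHom he (ZMod e) j) • g) ∘ ZMod.castHom he (ZMod e) := by
  funext x
  simp only [sr_smul_apply, Function.comp_apply, map_sub]

theorem stabilizer_eq_bot_iff (f : ZMod n → A) :
    MulAction.stabilizer (DihedralGroup n) f = ⊥ ↔
      periods f = ⊥ ∧ ∀ j : ZMod n, sr j • f ≠ f := by
  simp only [Subgroup.eq_bot_iff_forall, AddSubgroup.eq_bot_iff_forall,
    MulAction.mem_stabilizer_iff, mem_periods]
  constructor
  · intro h
    exact ⟨fun j hj => r.inj (h _ hj), fun j hj => nomatch (h _ hj).trans one_def⟩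
  · rintro ⟨hr, hsr⟩ (j | j) hg
    · rw [hr j hg, r_zero]
    · exact absurd hg (hsr j)

theorem eq_of_sr_smul_eq_self {f : ZMod n → A} (hf : periods f = ⊥) {i j : ZMod n}
    (hi : sr i • f = f) (hj : sr j • f = f) : i = j := by
  have hij : j - i ∈ periods f := by rw [mem_periods, ← sr_mul_sr, mul_smul, hj, hi]
  rw [hf, AddSubgroup.mem_bot, sub_eq_zero] at hij
  exact hij.symm

variable [Fintype A]

theorem card_filter_natCast_mem_periods [NeZero n] {e : ℕ} [NeZero e] (he : e ∣ n)
    (Q : (ZMod n → A) → Prop) [DecidablePred Q] :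
    #{f | (e : ZMod n) ∈ periods f ∧ Q f} =
      #{g : ZMod e → A | Q (g ∘ ZMod.castHom he (ZMod e))} := by
  refine (Finset.card_nbij (· ∘ ZMod.castHom he (ZMod e)) ?_
    (ZMod.castHom_surjective he).injective_comp_right.injOn ?_).symm
  · intro g hg
    simp only [Finset.coe_filter, Finset.mem_univ, true_and, Set.mem_ofPred_eq] at hg ⊢
    exact ⟨(natCast_mem_periods_iff_exists_comp he _).2 ⟨g, rfl⟩, hg⟩
  · intro f hf
    simp only [Finset.coe_filter, Finset.mem_univ, true_and, Set.mem_ofPred_eq] at hf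
    obtain ⟨g, rfl⟩ := (natCast_mem_periods_iff_exists_comp he f).1 hf.1
    exact ⟨g, by simpa using hf.2, rfl⟩

theorem card_filter_natCast_mem_periods_sr [NeZero n] {e : ℕ} [NeZero e] (he : e ∣ n)
    (j : ZMod n) :
    #{f : ZMod n → A | (e : ZMod n) ∈ periods f ∧ sr j • f = f} =
      #{g : ZMod e → A | sr (ZMod.castHom he (ZMod e) j) • g = g} := by
  rw [card_filter_natCast_mem_periods he]
  simp only [sr_smul_comp_castHom, (ZMod.castHom_surjective he).injective_comp_right.eq_iff]

section Reflections

variable {m : ℕ} [NeZero m]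

theorem card_filter_sr_add_two_mul (i c : ZMod m) :
    #{g : ZMod m → A | sr (i + 2 * c) • g = g} = #{g : ZMod m → A | sr i • g = g} := by
  have hconj : sr (i + 2 * c) = r (-c) * sr i * (r (-c))⁻¹ := by
    rw [inv_r, r_mul_sr, sr_mul_r]
    ring_nf
  rw [hconj, MulAction.card_filter_conj_smul_eq_self]

theorem card_filter_sr_zero (hm : Even m) :
    #{g : ZMod m → A | sr (0 : ZMod m) • g = g} = Fintype.card A ^ (m / 2 + 1) := by
  obtain ⟨h, rfl⟩ := hm
  let T : Finset (ZMod (h + h)) := {x | x.val < h + 1}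
  have hcover (x : ZMod (h + h)) : x ∈ T ∨ 0 - x ∈ T := by
    have := ZMod.val_lt x
    simp only [T, Finset.mem_filter, Finset.mem_univ, true_and, zero_sub, ZMod.neg_val]
    split_ifs <;> omega
  have hT (x : ZMod (h + h)) (hx : x ∈ T) (hσx : 0 - x ∈ T) : 0 - x = x := by
    simp only [T, Finset.mem_filter, Finset.mem_univ, true_and, zero_sub, ZMod.neg_val]
      at hx hσx ⊢
    split_ifs at hσx with hx0
    · simp [hx0]
    · exact ZMod.val_injective _ (by rw [ZMod.neg_val, if_neg hx0]; omega)
  calc _ = Fintype.card A ^ #T :=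
        Function.Involutive.card_filter_comp_eq_self (fun x => sub_sub_cancel 0 x) T hcover hT
    _ = _ := by
        have : h ≠ 0 := fun h0 => NeZero.ne (h + h) (by omega)
        rw [ZMod.card_filter_val_lt (by omega), show (h + h) / 2 = h by omega]

theorem card_filter_sr_neg_one (hm : Even m) :
    #{g : ZMod m → A | sr (-1 : ZMod m) • g = g} = Fintype.card A ^ (m / 2) := by
  obtain ⟨h, rfl⟩ := hm
  have hval (x : ZMod (h + h)) : (-1 - x).val = h + h - 1 - x.val := by
    have := ZMod.val_lt x
    rw [← ZMod.val_cast_of_lt (n := h + h) (a := h + h - 1 - x.val) (by omega)]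
    congr 1
    rw [Nat.cast_sub (by omega), Nat.cast_sub (by omega), ZMod.natCast_self, ZMod.natCast_zmod_val]
    ring
  let T : Finset (ZMod (h + h)) := {x | x.val < h}
  have hcover (x : ZMod (h + h)) : x ∈ T ∨ -1 - x ∈ T := by
    have := ZMod.val_lt x
    simp only [T, Finset.mem_filter, Finset.mem_univ, true_and, hval]
    omega
  have hT (x : ZMod (h + h)) (hx : x ∈ T) (hσx : -1 - x ∈ T) : -1 - x = x := by
    simp only [T, Finset.mem_filter, Finset.mem_univ, true_and, hval] at hx hσx
    omega
  calc _ = Fintype.card A ^ #T :=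
        Function.Involutive.card_filter_comp_eq_self (fun x => sub_sub_cancel (-1) x) T hcover hT
    _ = _ := by rw [ZMod.card_filter_val_lt (by omega), show (h + h) / 2 = h by omega]

theorem card_filter_sr_add_card_filter_sr_add_one (hm : Even m) (i : ZMod m) :
    #{g : ZMod m → A | sr i • g = g} + #{g : ZMod m → A | sr (i + 1) • g = g} =
      Fintype.card A ^ (m / 2 + 1) + Fintype.card A ^ (m / 2) := by
  have hi : i = (i.val : ZMod m) := (ZMod.natCast_zmod_val i).symm
  obtain ⟨q, hq | hq⟩ := Nat.even_or_odd' i.val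
  · have h1 : i + 1 = -1 + 2 * ((q : ZMod m) + 1) := by rw [hi, hq]; push_cast; ring
    have h0 : i = 0 + 2 * (q : ZMod m) := by rw [hi, hq]; push_cast; ring
    rw [h1, h0, card_filter_sr_add_two_mul, card_filter_sr_add_two_mul, card_filter_sr_zero hm,
      card_filter_sr_neg_one hm]
  · have h1 : i + 1 = 0 + 2 * ((q : ZMod m) + 1) := by rw [hi, hq]; push_cast; ring
    have h0 : i = -1 + 2 * ((q : ZMod m) + 1) := by rw [hi, hq]; push_cast; ring
    rw [h1, h0, card_filter_sr_add_two_mul, card_filter_sr_add_two_mul, card_filter_sr_zero hm,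
      card_filter_sr_neg_one hm, add_comm]

end Reflections

theorem two_mul_sum_card_filter_natCast_mem_periods_sr [NeZero n] {e : ℕ} (he : e ∣ n)
    (hev : Even e) :
    2 * ∑ j : ZMod n, #{f : ZMod n → A | (e : ZMod n) ∈ periods f ∧ sr j • f = f} =
      n * (Fintype.card A ^ (e / 2 + 1) + Fintype.card A ^ (e / 2)) := by
  have : NeZero e := ⟨by rintro rfl; exact NeZero.ne n (zero_dvd_iff.1 he)⟩
  simp_rw [card_filter_natCast_mem_periods_sr he]
  rw [Fintype.two_mul_sum_eq_card_mul_of_add_shift 1 fun j => by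
    rw [map_add, map_one]; exact card_filter_sr_add_card_filter_sr_add_one hev _, ZMod.card]

theorem card_filter_periods_eq_bot_and [NeZero n] (P : (ZMod n → A) → Prop) [DecidablePred P] :
    (#{f | periods f = ⊥ ∧ P f} : ℤ) =
      ∑ e ∈ n.divisors, μ (n / e) * #{f | (e : ZMod n) ∈ periods f ∧ P f} := by
  simp only [Finset.card_filter, Nat.cast_sum, Finset.mul_sum]
  rw [Finset.sum_comm]
  refine Finset.sum_congr rfl fun f _ => ?_
  by_cases hP : P f
  · simp only [hP, and_true, ZMod.natCast_mem_iff_index_dvd, Nat.cast_ite, Nat.cast_one,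
      Nat.cast_zero, mul_ite, mul_one, mul_zero]
    rw [← Finset.sum_filter, ArithmeticFunction.sum_moebius_div_filter_dvd (NeZero.ne n)
      (by simpa using (periods f).index_dvd_card)]
    simp only [periods_eq_bot_iff_index]
  · simp [hP]

theorem card_filter_periods_eq_bot [NeZero n] :
    (#{f : ZMod n → A | periods f = ⊥} : ℤ) =
      ∑ e ∈ n.divisors, μ (n / e) * (Fintype.card A : ℤ) ^ e := by
  have h := card_filter_periods_eq_bot_and (A := A) (n := n) fun _ => True
  simp only [and_true] at h
  rw [h]
  refine Finset.sum_congr rfl fun e he => ?_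
  have : NeZero e := ⟨Nat.ne_of_gt (Nat.pos_of_mem_divisors he)⟩
  have hc := card_filter_natCast_mem_periods (A := A) (Nat.dvd_of_mem_divisors he) fun _ => True
  simp only [and_true] at hc
  simp [hc]

theorem card_filter_periods_eq_bot_eq_add [NeZero n] :
    #{f : ZMod n → A | periods f = ⊥} =
      #{f : ZMod n → A | MulAction.stabilizer (DihedralGroup n) f = ⊥} +
        ∑ j : ZMod n, #{f : ZMod n → A | periods f = ⊥ ∧ sr j • f = f} := by
  have hdisj : ((Finset.univ : Finset (ZMod n)) : Set (ZMod n)).PairwiseDisjoint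
      fun j => ({f | periods f = ⊥ ∧ sr j • f = f} : Finset (ZMod n → A)) := by
    intro i _ j _ hij
    refine Finset.disjoint_left.2 fun f hfi hfj => hij ?_
    simp only [Finset.mem_filter, Finset.mem_univ, true_and] at hfi hfj
    exact eq_of_sr_smul_eq_self hfi.1 hfi.2 hfj.2
  rw [← Finset.card_biUnion hdisj, ← Finset.card_union_of_disjoint]
  · congr 1
    ext f
    simp only [Finset.mem_filter, Finset.mem_univ, true_and, Finset.mem_union, Finset.mem_biUnion,
      stabilizer_eq_bot_iff]
    refine ⟨fun hf => ?_, by rintro (⟨hf, -⟩ | ⟨-, hf, -⟩) <;> exact hf⟩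
    by_cases h : ∃ j : ZMod n, sr j • f = f
    · obtain ⟨j, hj⟩ := h
      exact .inr ⟨j, hf, hj⟩
    · exact .inl ⟨hf, not_exists.1 h⟩
  · refine Finset.disjoint_left.2 fun f hf hf' => ?_
    simp only [Finset.mem_filter, Finset.mem_univ, true_and, Finset.mem_biUnion,
      stabilizer_eq_bot_iff] at hf hf'
    obtain ⟨j, -, hj⟩ := hf'
    exact hf.2 j hj

theorem two_mul_sum_card_filter_periods_eq_bot_sr [NeZero n] (hn : 4 ∣ n) :
    2 * ∑ j : ZMod n, (#{f : ZMod n → A | periods f = ⊥ ∧ sr j • f = f} : ℤ) =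
      n * ∑ e ∈ n.divisors with Even e,
        μ (n / e) * ((Fintype.card A : ℤ) ^ (e / 2 + 1) + (Fintype.card A : ℤ) ^ (e / 2)) := by
  simp_rw [card_filter_periods_eq_bot_and]
  rw [Finset.sum_comm, Finset.mul_sum, Finset.mul_sum, Finset.sum_filter]
  refine Finset.sum_congr rfl fun e he => ?_
  rw [Nat.mem_divisors] at he
  split_ifs with hev
  · have h : 2 * ∑ j : ZMod n,
          (#{f : ZMod n → A | (e : ZMod n) ∈ periods f ∧ sr j • f = f} : ℤ) =
        n * ((Fintype.card A : ℤ) ^ (e / 2 + 1) + (Fintype.card A : ℤ) ^ (e / 2)) := by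
      exact_mod_cast two_mul_sum_card_filter_natCast_mem_periods_sr he.1 hev
    rw [← Finset.mul_sum]
    linear_combination (μ (n / e) : ℤ) * h
  · simp [ArithmeticFunction.moebius_div_eq_zero_of_four_dvd hn he.1 hev]

end NgonColoring

theorem card_free_orbits_ngon_four_dvd_general (n : ℕ) (hn : 4 ≤ n) (hdvd : 4 ∣ n)
    (A : Type*) [Fintype A] :
    (Nat.card {ω : MulAction.orbitRel.Quotient (DihedralGroup n) (ZMod n → A) //
        Nat.card ω.orbit = 2 * n} : ℚ) =
      (1 / (2 * (n : ℚ))) * ∑ d ∈ n.divisors,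
          (ArithmeticFunction.moebius (n / d) : ℚ) * (Fintype.card A : ℚ) ^ d -
        (1 / 4) * ∑ d ∈ n.divisors.filter (fun d => Even d),
          (ArithmeticFunction.moebius (n / d) : ℚ) *
            ((Fintype.card A : ℚ) ^ (d / 2 + 1) + (Fintype.card A : ℚ) ^ (d / 2)) := by
  classical
  have : NeZero n := ⟨by omega⟩
  have hfree : Nat.card {ω : MulAction.orbitRel.Quotient (DihedralGroup n) (ZMod n → A) //
      Nat.card ω.orbit = 2 * n} * (2 * n) =
        #{f : ZMod n → A | MulAction.stabilizer (DihedralGroup n) f = ⊥} := by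
    rw [← DihedralGroup.nat_card (n := n), MulAction.card_free_orbits_mul_card_group,
      Nat.card_eq_fintype_card, Fintype.card_subtype]
  have hsplit := NgonColoring.card_filter_periods_eq_bot_eq_add (n := n) (A := A)
  have haper := NgonColoring.card_filter_periods_eq_bot (n := n) (A := A)
  have hrefl := NgonColoring.two_mul_sum_card_filter_periods_eq_bot_sr (A := A) hdvd
  rw [hsplit, ← hfree] at haper
  have hn0 : (n : ℚ) ≠ 0 := by exact_mod_cast NeZero.ne n
  have haperQ := congrArg (Int.cast : ℤ → ℚ) haper
  have hreflQ := congrArg (Int.cast : ℤ → ℚ) hrefl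
  push_cast at haperQ hreflQ
  field_simp
  linear_combination 4 * haperQ - 2 * hreflQ

/-- For `4 ∣ n`, `n ≥ 4`, the number of free orbits (orbits of
cardinality `2n`, i.e. primitive colorings up to symmetry) of the dihedral
group `D_n` acting on colorings of the vertices of a regular `n`-gon with
`k = |A| ≥ 2` colors equals
`(1/(2n)) ∑_{d ∣ n} μ(n/d) k^d
  - (1/4) ∑_{d ∣ n, d even} μ(n/d) (k^{d/2+1} + k^{d/2})`. -/
theorem card_free_orbits_ngon_four_dvd (n : ℕ) (hn : 4 ≤ n) (hdvd : 4 ∣ n)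
    (A : Type*) [Fintype A] (hA : 2 ≤ Fintype.card A) :
    (Nat.card {ω : MulAction.orbitRel.Quotient (DihedralGroup n) (ZMod n → A) //
        Nat.card ω.orbit = 2 * n} : ℚ) =
      (1 / (2 * (n : ℚ))) * ∑ d ∈ n.divisors,
          (ArithmeticFunction.moebius (n / d) : ℚ) * (Fintype.card A : ℚ) ^ d -
        (1 / 4) * ∑ d ∈ n.divisors.filter (fun d => Even d),
          (ArithmeticFunction.moebius (n / d) : ℚ) *
            ((Fintype.card A : ℚ) ^ (d / 2 + 1) + (Fintype.card A : ℚ) ^ (d / 2)) :=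
  card_free_orbits_ngon_four_dvd_general n hn hdvd A
end
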